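/- Let w be an (ℓ,q)-partial multi Kreweras word with associated V-strict labeling f = W(w), and let {L'_1,…,L'_ℓ} be the noncrossing layer decomposition of f. Then Pro(f) is the V-strict labeling obtained by applying single-layer promotion Pro to each increasing labeling L'_i and then, within each fiber F_p (p ∈ {A,B,C}), sorting the resulting multiset of labels weakly increasingly. -/

import Mathlib

open scoped Classical

/-- The poset `V` on `{A, B, C}` with cover relations `A ⋖ B` and `A ⋖ C`. -/
inductive V : Type
  | A | B | C
deriving DecidableEq

instance : Fintype V where
  elems := ⟨{V.A, V.B, V.C}, by decide⟩
  complete x := by cases x <;> decide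

instance : PartialOrder V where
  le x y := x = y ∨ x = V.A
  le_refl x := Or.inl rfl
  le_trans x y z h1 h2 := by
    rcases h1 with rfl | rfl
    · exact h2
    · exact Or.inr rfl
  le_antisymm x y h1 h2 := by
    rcases h1 with rfl | rfl
    · rfl
    · rcases h2 with rfl | rfl <;> rfl

/-- A `V`-strict labeling of `V × [ℓ]` with labels in `[q]` (i.e. an element of
`L_{V×[ℓ]}(R^q)`): labels are in `{1, …, q}`, strictly increase along copies of `V`,
and weakly increase along the fibers. -/
def IsVL (ℓ q : ℕ) (f : V → Fin ℓ → ℕ) : Prop :=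
  (∀ p i, 1 ≤ f p i ∧ f p i ≤ q) ∧
  (∀ i, f V.A i < f V.B i ∧ f V.A i < f V.C i) ∧
  (∀ p, Monotone (f p))

/-- The label of `f` at `(p, i)` is raisable: there is another `V`-strict labeling `g`
with `g p i > f p i` agreeing with `f` at all `(p', i')` with `p' ≠ p`. -/
def Raisable (ℓ q : ℕ) (f : V → Fin ℓ → ℕ) (p : V) (i : Fin ℓ) : Prop :=
  ∃ g, IsVL ℓ q g ∧ f p i < g p i ∧ ∀ p' i', p' ≠ p → g p' i' = f p' i'

/-- The label of `f` at `(p, i)` is lowerable. -/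
def Lowerable (ℓ q : ℕ) (f : V → Fin ℓ → ℕ) (p : V) (i : Fin ℓ) : Prop :=
  ∃ g, IsVL ℓ q g ∧ g p i < f p i ∧ ∀ p' i', p' ≠ p → g p' i' = f p' i'

/-- The `k`-th Bender–Knuth involution: in each fiber, the free labels consist of `a`
raisable labels equal to `k` followed by `b` lowerable labels equal to `k+1`; they are
replaced by `b` copies of `k` followed by `a` copies of `k+1`. -/
noncomputable def BK (ℓ q k : ℕ) (f : V → Fin ℓ → ℕ) : V → Fin ℓ → ℕ :=
  fun p i =>
    let S := Finset.univ.filter fun j : Fin ℓ => f p j = k ∧ Raisable ℓ q f p j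
    let T := Finset.univ.filter fun j : Fin ℓ => f p j = k + 1 ∧ Lowerable ℓ q f p j
    let U := S ∪ T
    if i ∈ U then (if (U.filter fun j => j < i).card < T.card then k else k + 1)
    else f p i

/-- `P`-strict promotion `Pro = τ_{q-1} ∘ ⋯ ∘ τ_2 ∘ τ_1`. -/
noncomputable def Pro (ℓ q : ℕ) (f : V → Fin ℓ → ℕ) : V → Fin ℓ → ℕ :=
  (List.range (q - 1)).foldl (fun g k => BK ℓ q (k + 1) g) f

/-- `m` encodes the unique noncrossing matching, in the generalized bump diagram of the
`(ℓ,q)`-partial multi Kreweras word corresponding to `f`, between the `A`'s and the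
letters `p` (`p = B` or `p = C`): the `s`-th `A` (in the linear order: blocks in order,
`B`'s and `C`'s preceding `A`'s within a block) is matched to the `m s`-th `p`, which
must lie in a strictly later block, and no two arcs form a crossing (arcs
`(A_s, j_s)`, `(A_{s'}, j_{s'})` with `s < s'` cross exactly when the block of `A_{s'}`
strictly precedes the block `j_s` of the first closer, which strictly precedes the
block `j_{s'}` of the second closer). -/
def IsNCMatching (ℓ : ℕ) (f : V → Fin ℓ → ℕ) (p : V) (m : Equiv.Perm (Fin ℓ)) : Prop :=
  (∀ s, f V.A s < f p (m s)) ∧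
  ∀ s s' : Fin ℓ, s < s' →
    ¬(f V.A s' < f p (m s) ∧ f p (m s) < f p (m s'))

/-- The `i`-th layer `L'_i` of the noncrossing layer decomposition: `A` is labeled by the
block of `A_i`, and `B`, `C` by the blocks of the `B` and `C` matched to `A_i`. -/
def Layer (ℓ : ℕ) (f : V → Fin ℓ → ℕ) (mB mC : Equiv.Perm (Fin ℓ)) (i : Fin ℓ) :
    V → ℕ
  | V.A => f V.A i
  | V.B => f V.B (mB i)
  | V.C => f V.C (mC i)

/-- Single-layer promotion: `P`-strict promotion on `L_{V×[1]}(R^q)`, i.e. on increasing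
labelings of `V` with labels in `[q]`. -/
noncomputable def Pro1 (q : ℕ) (g : V → ℕ) : V → ℕ :=
  fun p => Pro 1 q (fun p' _ => g p') p 0

/-!
A weakly increasing fiber is determined by its counts `countLE u x = #{i | u i ≤ x}`, and the
fibers of the claimed labeling carry the multisets of the promoted layers, so it suffices to compare
counts. The toggle `τ_k` changes the counts of a `V`-strict labeling only at level `k`: in each
fiber the raisable `k`s and the lowerable `k + 1`s form consecutive runs of indices whose ends are
counts at levels `k - 1`, `k`, `k + 1`, so the new count at level `k` is a min/max expression in
the old ones. By induction over `τ_1, …, τ_{q-1}`, after `τ_j` the counts at levels `≤ j` are those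
of the promoted layers. The inductive step is a counting identity for noncrossing matchings: the
partners of the `A`s with label `1` decrease along the order of the `A`s, so the sets of indices
involved are initial segments, and two initial segments meet in the smaller one. Finally,
single-layer promotion has an explicit closed form, obtained by applying the result to `ℓ = 1`.
-/

open Finset

section Counting

variable {n : ℕ}

def countLE (u : Fin n → ℕ) (x : ℕ) : ℕ := #{i | u i ≤ x}

theorem countLE_mono (u : Fin n → ℕ) : Monotone (countLE u) :=
  fun _ _ hxy => card_le_card (monotone_filter_right _ fun _ _ hi => hi.trans hxy)

theorem countLE_le (u : Fin n → ℕ) (x : ℕ) : countLE u x ≤ n :=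
  (card_filter_le _ _).trans_eq (card_fin n)

theorem countLE_eq_zero {u : Fin n → ℕ} (hu : ∀ i, 1 ≤ u i) : countLE u 0 = 0 := by
  simpa [countLE, filter_eq_empty_iff] using fun i => Nat.one_le_iff_ne_zero.1 (hu i)

theorem countLE_eq_of_le {u : Fin n → ℕ} {x : ℕ} (hu : ∀ i, u i ≤ x) : countLE u x = n := by
  simp [countLE, hu]

theorem countLE_comp_perm (u : Fin n → ℕ) (σ : Equiv.Perm (Fin n)) (x : ℕ) :
    countLE (fun i => u (σ i)) x = countLE u x :=
  card_equiv σ (by simp)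

theorem Monotone.le_iff_lt_countLE {u : Fin n → ℕ} (hu : Monotone u) (i : Fin n) (x : ℕ) :
    u i ≤ x ↔ (i : ℕ) < countLE u x :=
  (Fin.lt_card_filter_univ_iff_apply_of_imp _ fun _ _ hji hi => (hu hji).trans hi).symm

theorem card_filter_Ico_val (lo hi : ℕ) :
    #{i : Fin n | lo ≤ (i : ℕ) ∧ (i : ℕ) < hi} = min n hi - min n lo := by
  have hsplit := card_filter_add_card_filter_not (s := {i : Fin n | (i : ℕ) < hi})
    (fun i => (i : ℕ) < lo)
  rw [filter_filter, filter_congr (q := fun i : Fin n => (i : ℕ) < min hi lo) (by simp),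
    Fin.card_filter_val_lt, Fin.card_filter_val_lt, filter_filter] at hsplit
  rw [filter_congr (q := fun i : Fin n => (i : ℕ) < hi ∧ ¬(i : ℕ) < lo) (by intros; omega)]
  omega

theorem card_filter_eq_add {P Q R : Fin n → Prop} [DecidablePred P] [DecidablePred Q]
    [DecidablePred R] (h : ∀ i, P i ↔ Q i ∨ R i) (hQR : ∀ i, ¬(Q i ∧ R i)) :
    #{i | P i} = #{i | Q i} + #{i | R i} := by
  rw [filter_congr fun i _ => h i, filter_or, card_union_of_disjoint]
  exact disjoint_filter.2 fun i _ hQ hR => hQR i ⟨hQ, hR⟩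

theorem card_filter_mono {P Q : Fin n → Prop} [DecidablePred P] [DecidablePred Q]
    (h : ∀ i, P i → Q i) : #{i | P i} ≤ #{i | Q i} :=
  card_le_card (monotone_filter_right _ fun i _ => h i)

theorem card_filter_eq_countLE_sub (u : Fin n → ℕ) (y : ℕ) :
    #{i | u i = y + 1} = countLE u (y + 1) - countLE u y := by
  have := card_filter_eq_add (P := fun i => u i ≤ y + 1) (Q := fun i => u i ≤ y)
    (R := fun i => u i = y + 1) (fun i => by omega) (fun i => by omega)
  simp only [countLE]
  omega

theorem map_univ_eq_of_countLE_eq {u v : Fin n → ℕ} (h : ∀ x, countLE u x = countLE v x) :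
    univ.val.map u = univ.val.map v := by
  ext y
  simp only [Multiset.count_map]
  change #{i | y = u i} = #{i | y = v i}
  rcases y with _ | y
  · simpa [countLE, eq_comm] using h 0
  · simp only [eq_comm (a := y + 1), card_filter_eq_countLE_sub, h]

theorem countLE_eq_of_le_iff {u : Fin n → ℕ} {x m : ℕ} (hu : ∀ i : Fin n, u i ≤ x ↔ (i : ℕ) < m)
    (hm : m ≤ n) : countLE u x = m := by
  simp only [countLE, hu, Fin.card_filter_val_lt]
  omega

theorem monotone_of_le_iff {u v : Fin n → ℕ} (hu : Monotone u) {k m : ℕ}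
    (hne : ∀ x, x ≠ k → ∀ i, v i ≤ x ↔ u i ≤ x) (hk : ∀ i : Fin n, v i ≤ k ↔ (i : ℕ) < m) :
    Monotone v := by
  intro i i' hii'
  by_cases hv : v i' = k
  · have := (hk i').1 hv.le
    rw [hv, hk]
    exact (Fin.le_def.1 hii').trans_lt this
  · exact (hne _ hv i).2 (hu hii' |>.trans ((hne _ hv i').1 le_rfl))

theorem card_filter_and_of_downward_closed {P Q : Fin n → Prop} [DecidablePred P]
    [DecidablePred Q] (hP : ∀ i j, j ≤ i → P i → P j) (hQ : ∀ i j, j ≤ i → Q i → Q j) :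
    #{i | P i ∧ Q i} = min #{i | P i} #{i | Q i} := by
  rw [filter_congr fun i _ => by
      rw [← Fin.lt_card_filter_univ_iff_apply_of_imp P hP,
        ← Fin.lt_card_filter_univ_iff_apply_of_imp Q hQ, ← lt_min_iff],
    Fin.card_filter_val_lt]
  exact min_eq_right ((min_le_left _ _).trans (card_le_univ _) |>.trans_eq (Fintype.card_fin n))

end Counting

section Toggles

variable {ℓ q : ℕ} {g : V → Fin ℓ → ℕ}

theorem monotone_ite_of_le {α : Type*} [Preorder α] {P : α → Prop} [DecidablePred P]
    (hP : ∀ a b, a ≤ b → P a → P b) {c d : ℕ} (hcd : c ≤ d) :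
    Monotone fun a => if P a then d else c := by
  intro a b hab
  by_cases ha : P a
  · simp [ha, hP a b hab ha]
  · dsimp only; split_ifs <;> omega

theorem lt_apply_of_ne_A {g : V → ℕ} (h : g V.A < g V.B ∧ g V.A < g V.C) {p : V}
    (hp : p ≠ V.A) : g V.A < g p := by
  cases p <;> first | exact absurd rfl hp | exact h.1 | exact h.2

theorem isVL_update_A (hg : IsVL ℓ q g) {u : Fin ℓ → ℕ} (hbd : ∀ j, 1 ≤ u j ∧ u j ≤ q)
    (hu : Monotone u) (hstr : ∀ j, u j < g V.B j ∧ u j < g V.C j) :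
    IsVL ℓ q (Function.update g V.A u) := by
  refine ⟨fun p j => ?_, fun j => by simpa using hstr j, fun p => ?_⟩ <;>
    cases p <;> simp [hbd, hu, hg.1, hg.2.2]

theorem isVL_update_of_ne_A (hg : IsVL ℓ q g) {p : V} (hp : p ≠ V.A) {u : Fin ℓ → ℕ}
    (hbd : ∀ j, 1 ≤ u j ∧ u j ≤ q) (hu : Monotone u) (hstr : ∀ j, g V.A j < u j) :
    IsVL ℓ q (Function.update g p u) := by
  refine ⟨fun p' j => ?_, fun j => ?_, fun p' => ?_⟩
  · rcases eq_or_ne p' p with rfl | hp' <;> simp [*, hg.1]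
  · have := hg.2.1 j
    have := hstr j
    cases p <;> simp_all
  · rcases eq_or_ne p' p with rfl | hp' <;> simp [*, hg.2.2]

theorem raisable_of_update {p : V} {i : Fin ℓ} {u : Fin ℓ → ℕ}
    (h : IsVL ℓ q (Function.update g p u)) (hi : g p i < u i) : Raisable ℓ q g p i :=
  ⟨_, h, by simpa using hi, fun _ _ hp => by simp [hp]⟩

theorem lowerable_of_update {p : V} {i : Fin ℓ} {u : Fin ℓ → ℕ}
    (h : IsVL ℓ q (Function.update g p u)) (hi : u i < g p i) : Lowerable ℓ q g p i :=
  ⟨_, h, by simpa using hi, fun _ _ hp => by simp [hp]⟩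

theorem raisable_A_iff (hg : IsVL ℓ q g) (i : Fin ℓ) :
    Raisable ℓ q g V.A i ↔ g V.A i + 2 ≤ g V.B i ∧ g V.A i + 2 ≤ g V.C i := by
  obtain ⟨hbd, hstr, hmono⟩ := hg
  constructor
  · rintro ⟨g', ⟨-, hstr', -⟩, hlt, hagree⟩
    have := hstr' i
    rw [hagree V.B i (by decide), hagree V.C i (by decide)] at this
    omega
  · rintro ⟨hB, hC⟩
    have hind := monotone_ite_of_le (P := (i ≤ ·)) (fun _ _ h h' => h'.trans h)
      (Nat.zero_le (g V.A i + 1))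
    refine raisable_of_update (isVL_update_A ⟨hbd, hstr, hmono⟩
      (u := fun j => max (g V.A j) (if i ≤ j then g V.A i + 1 else 0))
      (fun j => ?_) ((hmono V.A).max hind) (fun j => ?_)) (by simp)
    · have := hbd V.A j; have := hbd V.B i
      split_ifs <;> omega
    · have := hstr j
      split_ifs with hij
      · have := hmono V.B hij; have := hmono V.C hij
        omega
      · omega

theorem lowerable_A_iff (hg : IsVL ℓ q g) (i : Fin ℓ) :
    Lowerable ℓ q g V.A i ↔ 2 ≤ g V.A i := by
  obtain ⟨hbd, hstr, hmono⟩ := hg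
  constructor
  · rintro ⟨g', ⟨hbd', -, -⟩, hlt, -⟩
    have := hbd' V.A i
    omega
  · intro h2
    have hind := monotone_ite_of_le (P := (i < ·)) (fun _ _ h h' => h'.trans_le h)
      ((Nat.sub_le (g V.A i) 1).trans (hbd V.A i).2)
    refine lowerable_of_update (isVL_update_A ⟨hbd, hstr, hmono⟩
      (u := fun j => min (g V.A j) (if i < j then q else g V.A i - 1))
      (fun j => ?_) ((hmono V.A).min hind) (fun j => ?_))
      (by simp only [lt_irrefl, if_false]; omega)
    · have := hbd V.A j; have := hbd V.A i
      split_ifs <;> omega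
    · have := hstr j
      omega

theorem raisable_iff_of_ne_A (hg : IsVL ℓ q g) {p : V} (hp : p ≠ V.A) (i : Fin ℓ) :
    Raisable ℓ q g p i ↔ g p i < q := by
  constructor
  · rintro ⟨g', ⟨hbd', -, -⟩, hlt, -⟩
    have := hbd' p i
    omega
  · intro hlt
    refine raisable_of_update (isVL_update_of_ne_A hg hp (u := fun j => max (g p j) (g p i + 1))
      (fun j => ?_) ((hg.2.2 p).max monotone_const) (fun j => ?_)) (by simp)
    · have := hg.1 p j
      omega
    · have := lt_apply_of_ne_A (g := (g · j)) (hg.2.1 j) hp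
      omega

theorem lowerable_iff_of_ne_A (hg : IsVL ℓ q g) {p : V} (hp : p ≠ V.A) (i : Fin ℓ) :
    Lowerable ℓ q g p i ↔ g V.A i + 2 ≤ g p i := by
  constructor
  · rintro ⟨g', ⟨-, hstr', -⟩, hlt, hagree⟩
    have := lt_apply_of_ne_A (g := (g' · i)) (hstr' i) hp
    rw [hagree V.A i hp.symm] at this
    omega
  · intro h2
    have hind := monotone_ite_of_le (P := (i < ·)) (fun _ _ h h' => h'.trans_le h)
      ((Nat.sub_le (g p i) 1).trans (hg.1 p i).2)
    refine lowerable_of_update (isVL_update_of_ne_A hg hp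
      (u := fun j => min (g p j) (if i < j then q else g p i - 1))
      (fun j => ?_) ((hg.2.2 p).min hind) (fun j => ?_)) (by simp only [lt_irrefl, if_false]; omega)
    · have := hg.1 p j; have := hg.1 p i
      split_ifs <;> omega
    · have := lt_apply_of_ne_A (g := (g · j)) (hg.2.1 j) hp
      split_ifs with hij
      · have := (hg.1 p j).2
        omega
      · have := hg.2.2 V.A (le_of_not_gt hij)
        omega

end Toggles

section BenderKnuth

variable {ℓ q k : ℕ} {g : V → Fin ℓ → ℕ} {p : V} {i : Fin ℓ}

theorem BK_apply_of_not_toggleable (hR : g p i = k → ¬Raisable ℓ q g p i)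
    (hL : g p i = k + 1 → ¬Lowerable ℓ q g p i) : BK ℓ q k g p i = g p i := by
  simp only [BK]
  rw [if_neg]
  simp only [mem_union, mem_filter, mem_univ, true_and]
  tauto

theorem BK_apply_eq_or (q k : ℕ) (g : V → Fin ℓ → ℕ) (p : V) (i : Fin ℓ) :
    BK ℓ q k g p i = g p i ∨ ((g p i = k ∨ g p i = k + 1) ∧
      (BK ℓ q k g p i = k ∨ BK ℓ q k g p i = k + 1)) := by
  simp only [BK]
  split_ifs with hU
  all_goals simp only [mem_union, mem_filter, mem_univ, true_and] at hU; omega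

theorem BK_apply_le_iff_of_ne {x : ℕ} (hx : x ≠ k) : BK ℓ q k g p i ≤ x ↔ g p i ≤ x := by
  rcases BK_apply_eq_or q k g p i with h | h
  · rw [h]
  · omega

theorem BK_apply_of_intervals {s n t : ℕ}
    (hS : ∀ i : Fin ℓ, (g p i = k ∧ Raisable ℓ q g p i) ↔ s ≤ i ∧ i < n)
    (hT : ∀ i : Fin ℓ, (g p i = k + 1 ∧ Lowerable ℓ q g p i) ↔ n ≤ i ∧ i < t)
    (hsn : s ≤ n) (hnt : n ≤ t) (ht : t ≤ ℓ) (i : Fin ℓ) :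
    BK ℓ q k g p i =
      if s ≤ i ∧ i < t then (if i < s + (t - n) then k else k + 1) else g p i := by
  have hU : univ.filter (fun j => g p j = k ∧ Raisable ℓ q g p j) ∪
      univ.filter (fun j => g p j = k + 1 ∧ Lowerable ℓ q g p j) =
      univ.filter (fun j : Fin ℓ => s ≤ (j : ℕ) ∧ (j : ℕ) < t) := by
    ext j
    simp only [mem_union, mem_filter, mem_univ, true_and, hS, hT]
    omega
  have hTcard : #{j | g p j = k + 1 ∧ Lowerable ℓ q g p j} = t - n := by
    rw [filter_congr fun j _ => hT j, card_filter_Ico_val]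
    omega
  simp only [BK]
  rw [hU, hTcard]
  simp only [filter_filter, mem_filter, mem_univ, true_and]
  by_cases hi : s ≤ (i : ℕ) ∧ (i : ℕ) < t
  · have hbelow : #{j : Fin ℓ | (s ≤ (j : ℕ) ∧ (j : ℕ) < t) ∧ j < i} = i - s := by
      rw [filter_congr (q := fun j : Fin ℓ => s ≤ (j : ℕ) ∧ (j : ℕ) < i)
        (fun j _ => by rw [Fin.lt_def]; omega), card_filter_Ico_val]
      omega
    simp only [hi, hbelow]
    split_ifs <;> omega
  · simp [hi]

theorem BK_apply_le_iff_of_intervals {s n t : ℕ}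
    (hS : ∀ i : Fin ℓ, (g p i = k ∧ Raisable ℓ q g p i) ↔ s ≤ i ∧ i < n)
    (hT : ∀ i : Fin ℓ, (g p i = k + 1 ∧ Lowerable ℓ q g p i) ↔ n ≤ i ∧ i < t)
    (hsn : s ≤ n) (hnt : n ≤ t) (ht : t ≤ ℓ)
    (hlo : ∀ i : Fin ℓ, (i : ℕ) < s → g p i ≤ k) (hhi : ∀ i : Fin ℓ, t ≤ (i : ℕ) → k < g p i)
    (i : Fin ℓ) : BK ℓ q k g p i ≤ k ↔ (i : ℕ) < s + (t - n) := by
  rw [BK_apply_of_intervals hS hT hsn hnt ht]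
  have := hlo i; have := hhi i
  split_ifs <;> omega

theorem countLE_BK_of_ne {x : ℕ} (hx : x ≠ k) :
    countLE (BK ℓ q k g p) x = countLE (g p) x := by
  simp only [countLE, BK_apply_le_iff_of_ne hx]

end BenderKnuth

section ToggleStep

variable {ℓ q : ℕ} {g : V → Fin ℓ → ℕ}

theorem raisable_A_interval (hg : IsVL ℓ q g) (j : ℕ) (i : Fin ℓ) :
    (g V.A i = j + 1 ∧ Raisable ℓ q g V.A i) ↔
      min (countLE (g V.A) (j + 1)) (max (countLE (g V.A) j)
        (max (countLE (g V.B) (j + 2)) (countLE (g V.C) (j + 2)))) ≤ i ∧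
      i < countLE (g V.A) (j + 1) := by
  have := (hg.2.2 V.A).le_iff_lt_countLE i j
  have := (hg.2.2 V.A).le_iff_lt_countLE i (j + 1)
  have := (hg.2.2 V.B).le_iff_lt_countLE i (j + 2)
  have := (hg.2.2 V.C).le_iff_lt_countLE i (j + 2)
  rw [raisable_A_iff hg]
  omega

theorem lowerable_A_interval (hg : IsVL ℓ q g) (j : ℕ) (i : Fin ℓ) :
    (g V.A i = j + 2 ∧ Lowerable ℓ q g V.A i) ↔
      countLE (g V.A) (j + 1) ≤ i ∧ i < countLE (g V.A) (j + 2) := by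
  have := (hg.2.2 V.A).le_iff_lt_countLE i (j + 1)
  have := (hg.2.2 V.A).le_iff_lt_countLE i (j + 2)
  rw [lowerable_A_iff hg]
  omega

theorem raisable_interval_of_ne_A (hg : IsVL ℓ q g) {p : V} (hp : p ≠ V.A) {j : ℕ}
    (hj : j + 1 < q) (i : Fin ℓ) :
    (g p i = j + 1 ∧ Raisable ℓ q g p i) ↔
      countLE (g p) j ≤ i ∧ i < countLE (g p) (j + 1) := by
  have := (hg.2.2 p).le_iff_lt_countLE i j
  have := (hg.2.2 p).le_iff_lt_countLE i (j + 1)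
  rw [raisable_iff_of_ne_A hg hp]
  omega

theorem lowerable_interval_of_ne_A (hg : IsVL ℓ q g) {p : V} (hp : p ≠ V.A) (j : ℕ)
    (i : Fin ℓ) :
    (g p i = j + 2 ∧ Lowerable ℓ q g p i) ↔
      countLE (g p) (j + 1) ≤ i ∧
      i < max (countLE (g p) (j + 1)) (min (countLE (g p) (j + 2)) (countLE (g V.A) j)) := by
  have := (hg.2.2 p).le_iff_lt_countLE i (j + 1)
  have := (hg.2.2 p).le_iff_lt_countLE i (j + 2)
  have := (hg.2.2 V.A).le_iff_lt_countLE i j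
  have := lt_apply_of_ne_A (g := (g · i)) (hg.2.1 i) hp
  rw [lowerable_iff_of_ne_A hg hp]
  omega

theorem BK_apply_A_le_iff (hg : IsVL ℓ q g) (j : ℕ) (i : Fin ℓ) :
    BK ℓ q (j + 1) g V.A i ≤ j + 1 ↔
      i < min (countLE (g V.A) (j + 1)) (max (countLE (g V.A) j)
        (max (countLE (g V.B) (j + 2)) (countLE (g V.C) (j + 2)))) +
        (countLE (g V.A) (j + 2) - countLE (g V.A) (j + 1)) :=
  BK_apply_le_iff_of_intervals (raisable_A_interval hg j) (lowerable_A_interval hg j)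
    (min_le_left _ _) (countLE_mono _ (by omega)) (countLE_le _ _)
    (fun i hi => ((hg.2.2 V.A).le_iff_lt_countLE i (j + 1)).2 (by omega))
    (fun i hi => by have := (hg.2.2 V.A).le_iff_lt_countLE i (j + 2); omega) i

theorem BK_apply_le_iff_of_ne_A (hg : IsVL ℓ q g) {p : V} (hp : p ≠ V.A) {j : ℕ}
    (hj : j + 1 < q) (i : Fin ℓ) :
    BK ℓ q (j + 1) g p i ≤ j + 1 ↔
      i < countLE (g p) j + (max (countLE (g p) (j + 1))
        (min (countLE (g p) (j + 2)) (countLE (g V.A) j)) - countLE (g p) (j + 1)) :=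
  BK_apply_le_iff_of_intervals (raisable_interval_of_ne_A hg hp hj)
    (lowerable_interval_of_ne_A hg hp j) (countLE_mono _ (by omega)) (le_max_left _ _)
    (max_le (countLE_le _ _) ((min_le_left _ _).trans (countLE_le _ _)))
    (fun i hi => by have := (hg.2.2 p).le_iff_lt_countLE i j; omega)
    (fun i hi => by have := (hg.2.2 p).le_iff_lt_countLE i (j + 1); omega) i

theorem BK_apply_A_lt (hg : IsVL ℓ q g) (j : ℕ) {p : V} (hp : p ≠ V.A) (i : Fin ℓ) :
    BK ℓ q (j + 1) g V.A i < BK ℓ q (j + 1) g p i := by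
  have hlt := lt_apply_of_ne_A (g := (g · i)) (hg.2.1 i) hp
  by_cases h : g V.A i = j + 1 ∧ g p i = j + 2
  · -- the only configuration in which both labels could move, but neither is toggleable
    rw [BK_apply_of_not_toggleable (p := V.A), BK_apply_of_not_toggleable (p := p)]
    · exact hlt
    · omega
    · rw [lowerable_iff_of_ne_A hg hp]; omega
    · intro _ hR
      have := (raisable_A_iff hg i).1 hR
      cases p <;> simp_all
    · omega
  · rcases BK_apply_eq_or q (j + 1) g V.A i with hA | hA <;>
    rcases BK_apply_eq_or q (j + 1) g p i with hP | hP <;>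
    omega

theorem BK_apply_le_iff_lt (hg : IsVL ℓ q g) {j : ℕ} (hj : j + 1 < q) (p : V) :
    ∃ m, ∀ i : Fin ℓ, BK ℓ q (j + 1) g p i ≤ j + 1 ↔ (i : ℕ) < m := by
  cases p
  · exact ⟨_, BK_apply_A_le_iff hg j⟩
  all_goals exact ⟨_, BK_apply_le_iff_of_ne_A hg (by decide) hj⟩

theorem isVL_BK (hg : IsVL ℓ q g) {j : ℕ} (hj : j + 1 < q) : IsVL ℓ q (BK ℓ q (j + 1) g) := by
  refine ⟨fun p i => ?_, fun i => ⟨BK_apply_A_lt hg j (by decide) i,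
    BK_apply_A_lt hg j (by decide) i⟩, fun p => ?_⟩
  · have := hg.1 p i
    rcases BK_apply_eq_or q (j + 1) g p i with h | h <;>
    omega
  · obtain ⟨m, hm⟩ := BK_apply_le_iff_lt hg hj p
    exact monotone_of_le_iff (hg.2.2 p) (fun x hx i => BK_apply_le_iff_of_ne hx) hm

theorem countLE_BK_A (hg : IsVL ℓ q g) (j : ℕ) :
    countLE (BK ℓ q (j + 1) g V.A) (j + 1) =
      min (countLE (g V.A) (j + 1)) (max (countLE (g V.A) j)
        (max (countLE (g V.B) (j + 2)) (countLE (g V.C) (j + 2)))) +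
        (countLE (g V.A) (j + 2) - countLE (g V.A) (j + 1)) := by
  refine countLE_eq_of_le_iff (BK_apply_A_le_iff hg j) ?_
  have := countLE_le (g V.A) (j + 2)
  have := countLE_mono (g V.A) (by omega : j + 1 ≤ j + 2)
  omega

theorem countLE_BK_of_ne_A (hg : IsVL ℓ q g) {p : V} (hp : p ≠ V.A) {j : ℕ} (hj : j + 1 < q) :
    countLE (BK ℓ q (j + 1) g p) (j + 1) =
      countLE (g p) j + (max (countLE (g p) (j + 1))
        (min (countLE (g p) (j + 2)) (countLE (g V.A) j)) - countLE (g p) (j + 1)) := by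
  refine countLE_eq_of_le_iff (BK_apply_le_iff_of_ne_A hg hp hj) ?_
  have := countLE_le (g p) (j + 1)
  have := countLE_le (g p) (j + 2)
  have := countLE_mono (g p) (by omega : j ≤ j + 1)
  omega

end ToggleStep

section Noncrossing

variable {ℓ : ℕ}

/-- `IsNCMatching ℓ f p m` is `NoncrossingArcs (f V.A) (fun s => f p (m s))` by definition. -/
def NoncrossingArcs (a b : Fin ℓ → ℕ) : Prop :=
  (∀ s, a s < b s) ∧ ∀ s s' : Fin ℓ, s < s' → ¬(a s' < b s ∧ b s < b s')

variable {a b c : Fin ℓ → ℕ}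

theorem NoncrossingArcs.le_of_eq_one (hb : NoncrossingArcs a b) (ha1 : ∀ i, 1 ≤ a i)
    {i i' : Fin ℓ} (hii' : i ≤ i') (h1 : a i' = 1) : b i' ≤ b i := by
  rcases hii'.eq_or_lt with rfl | hlt
  · rfl
  · have := hb.2 i i' hlt
    have := hb.1 i
    have := ha1 i
    omega

theorem NoncrossingArcs.card_filter_one_and_le (hb : NoncrossingArcs a b)
    (hc : NoncrossingArcs a c) (ha : Monotone a) (ha1 : ∀ i, 1 ≤ a i) (v w : ℕ) :
    #{i | a i = 1 ∧ v ≤ b i ∧ w ≤ c i} =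
      min #{i | a i = 1 ∧ v ≤ b i} #{i | a i = 1 ∧ w ≤ c i} := by
  have hclosed : ∀ {d : Fin ℓ → ℕ}, NoncrossingArcs a d → ∀ v i j, j ≤ i →
      a i = 1 ∧ v ≤ d i → a j = 1 ∧ v ≤ d j := fun hd v i j hji ⟨hi1, hiv⟩ =>
    have hj1 : a j = 1 := le_antisymm (hi1 ▸ ha hji) (ha1 j)
    ⟨hj1, hiv.trans (hd.le_of_eq_one ha1 hji hi1)⟩
  rw [← card_filter_and_of_downward_closed (hclosed hb v) (hclosed hc w)]
  congr 1
  ext i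
  simp only [mem_filter, mem_univ, true_and]
  tauto

theorem NoncrossingArcs.card_filter_one_and_add_two_le (hb : NoncrossingArcs a b)
    (ha : Monotone a) (ha1 : ∀ i, 1 ≤ a i) {k : ℕ} (hk : 1 ≤ k) :
    #{i | a i = 1 ∧ k + 2 ≤ b i} =
      min #{i | a i = 1 ∧ k + 1 ≤ b i} #{i | a i ≤ k ∧ k + 2 ≤ b i} := by
  have h1 : #{i | a i = 1 ∧ k + 2 ≤ b i} ≤ #{i | a i = 1 ∧ k + 1 ≤ b i} :=
    card_filter_mono fun i hi => ⟨hi.1, by omega⟩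
  have h2 : #{i | a i = 1 ∧ k + 2 ≤ b i} ≤ #{i | a i ≤ k ∧ k + 2 ≤ b i} :=
    card_filter_mono fun i hi => ⟨by omega, hi.2⟩
  by_cases hex : ∃ i₀, a i₀ = 1 ∧ b i₀ = k + 1
  · -- an opener at a level in `[2, k]` whose arc passes `k + 1` would cross the arc of `i₀`
    obtain ⟨i₀, hi₀, hbi₀⟩ := hex
    have : #{i | a i ≤ k ∧ k + 2 ≤ b i} ≤ #{i | a i = 1 ∧ k + 2 ≤ b i} := by
      refine card_filter_mono fun i ⟨hik, hbi⟩ => ⟨?_, hbi⟩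
      by_contra hne
      have hlt : i₀ < i := lt_of_not_ge fun h => by have := ha h; have := ha1 i; omega
      exact hb.2 i₀ i hlt ⟨by have := ha1 i; omega, by omega⟩
    omega
  · push Not at hex
    have : #{i | a i = 1 ∧ k + 1 ≤ b i} = #{i | a i = 1 ∧ k + 2 ≤ b i} := by
      congr 1
      ext i
      simp only [mem_filter, mem_univ, true_and]
      constructor
      · rintro ⟨hi1, hib⟩
        exact ⟨hi1, by have := hex i hi1; omega⟩
      · rintro ⟨hi1, hib⟩
        exact ⟨hi1, by omega⟩
    omega

theorem countLE_add_card_filter_open (hab : ∀ i, a i < b i) (x : ℕ) :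
    countLE b (x + 1) + #{i | a i ≤ x ∧ x + 2 ≤ b i} = countLE a x :=
  (card_filter_eq_add (fun i => by have := hab i; omega) (fun i => by omega)).symm

end Noncrossing

section LayerPromotion

def layerProA (a b c : ℕ) : ℕ := if a = 1 then min b c - 1 else a - 1

def layerProLeaf (q a b c : ℕ) : ℕ := if a = 1 ∧ b ≤ c then q else b - 1

/-- Single-layer promotion in closed form: if `L A > 1` every label drops by one; if `L A = 1`,
the label of `A` becomes one less than its smaller leaf, that leaf (both, on a tie) moves to `q`,
and a larger leaf drops by one. -/
def promoteLayer (q : ℕ) (L : V → ℕ) : V → ℕ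
  | V.A => layerProA (L V.A) (L V.B) (L V.C)
  | V.B => layerProLeaf q (L V.A) (L V.B) (L V.C)
  | V.C => layerProLeaf q (L V.A) (L V.C) (L V.B)

variable {ℓ : ℕ} {a b c : Fin ℓ → ℕ}

theorem countLE_layerProA_add (ha1 : ∀ i, 1 ≤ a i) (x : ℕ) :
    countLE (fun i => layerProA (a i) (b i) (c i)) x + #{i | a i = 1 ∧ x + 2 ≤ b i ∧ x + 2 ≤ c i} =
      countLE a (x + 1) :=
  (card_filter_eq_add (fun i => by have := ha1 i; dsimp only [layerProA]; split_ifs <;> omega)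
    (fun i => by dsimp only [layerProA]; split_ifs <;> omega)).symm

theorem countLE_layerProLeaf {q x : ℕ} (hx : x < q) :
    countLE (fun i => layerProLeaf q (a i) (b i) (c i)) x =
      #{i | b i ≤ x + 1 ∧ ¬(a i = 1 ∧ b i ≤ c i)} := by
  refine congrArg card (filter_congr fun i _ => ?_)
  dsimp only [layerProLeaf]
  split_ifs <;> omega

theorem countLE_layerProA_succ (hb : NoncrossingArcs a b) (hc : NoncrossingArcs a c)
    (ha : Monotone a) (ha1 : ∀ i, 1 ≤ a i) (j : ℕ) :
    countLE (fun i => layerProA (a i) (b i) (c i)) (j + 1) =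
      min (countLE a (j + 1)) (max (countLE (fun i => layerProA (a i) (b i) (c i)) j)
        (max (countLE b (j + 2)) (countLE c (j + 2)))) +
      (countLE a (j + 2) - countLE a (j + 1)) := by
  have hA := countLE_layerProA_add (b := b) (c := c) ha1 j
  have hA' := countLE_layerProA_add (b := b) (c := c) ha1 (j + 1)
  have hB := countLE_add_card_filter_open hb.1 (j + 1)
  have hC := countLE_add_card_filter_open hc.1 (j + 1)
  have hmono := countLE_mono a (by omega : j + 1 ≤ j + 2)
  simp only [Nat.add_assoc, Nat.reduceAdd] at hA' hB hC
  have key : #{i | a i = 1 ∧ j + 3 ≤ b i ∧ j + 3 ≤ c i} =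
      min #{i | a i = 1 ∧ j + 2 ≤ b i ∧ j + 2 ≤ c i}
        (min #{i | a i ≤ j + 1 ∧ j + 3 ≤ b i} #{i | a i ≤ j + 1 ∧ j + 3 ≤ c i}) := by
    have hb' := hb.card_filter_one_and_add_two_le ha ha1 (k := j + 1) (by omega)
    have hc' := hc.card_filter_one_and_add_two_le ha ha1 (k := j + 1) (by omega)
    simp only [Nat.add_assoc, Nat.reduceAdd] at hb' hc'
    rw [hb.card_filter_one_and_le hc ha ha1, hb.card_filter_one_and_le hc ha ha1]
    omega
  omega

theorem countLE_layerProLeaf_succ (hb : NoncrossingArcs a b) (hc : NoncrossingArcs a c)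
    (ha : Monotone a) (ha1 : ∀ i, 1 ≤ a i) {q j : ℕ} (hj : j + 1 < q) :
    countLE (fun i => layerProLeaf q (a i) (b i) (c i)) (j + 1) =
      countLE (fun i => layerProLeaf q (a i) (b i) (c i)) j +
      (max (countLE b (j + 1)) (min (countLE b (j + 2))
        (countLE (fun i => layerProA (a i) (b i) (c i)) j)) - countLE b (j + 1)) := by
  rw [countLE_layerProLeaf hj, countLE_layerProLeaf (by omega : j < q)]
  have hA := countLE_layerProA_add (b := b) (c := c) ha1 j
  have hB := countLE_add_card_filter_open hb.1 (j + 1)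
  have hnew : #{i | b i ≤ j + 2 ∧ ¬(a i = 1 ∧ b i ≤ c i)} =
      #{i | b i ≤ j + 1 ∧ ¬(a i = 1 ∧ b i ≤ c i)} + #{i | b i = j + 2 ∧ ¬(a i = 1 ∧ b i ≤ c i)} :=
    card_filter_eq_add (fun i => by omega) (fun i => by omega)
  have hB2 : countLE b (j + 2) = countLE b (j + 1) + #{i | b i = j + 2} :=
    card_filter_eq_add (fun i => by omega) (fun i => by omega)
  have hB2' : #{i | b i = j + 2} =
      #{i | a i = 1 ∧ b i = j + 2 ∧ j + 2 ≤ c i} + #{i | b i = j + 2 ∧ ¬(a i = 1 ∧ b i ≤ c i)} :=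
    card_filter_eq_add (fun i => by omega) (fun i => by omega)
  have hE : #{i | a i = 1 ∧ j + 2 ≤ b i ∧ j + 2 ≤ c i} =
      #{i | a i = 1 ∧ b i = j + 2 ∧ j + 2 ≤ c i} + #{i | a i = 1 ∧ j + 3 ≤ b i ∧ j + 2 ≤ c i} :=
    card_filter_eq_add (fun i => by omega) (fun i => by omega)
  have key : #{i | a i = 1 ∧ j + 3 ≤ b i ∧ j + 2 ≤ c i} =
      min #{i | a i = 1 ∧ j + 2 ≤ b i ∧ j + 2 ≤ c i} #{i | a i ≤ j + 1 ∧ j + 3 ≤ b i} := by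
    have hb' := hb.card_filter_one_and_add_two_le ha ha1 (k := j + 1) (by omega)
    simp only [Nat.add_assoc, Nat.reduceAdd] at hb'
    rw [hb.card_filter_one_and_le hc ha ha1, hb.card_filter_one_and_le hc ha ha1]
    omega
  simp only [Nat.add_assoc, Nat.reduceAdd] at hB ⊢
  omega

end LayerPromotion

section Promotion

variable {ℓ q : ℕ} {f : V → Fin ℓ → ℕ} {mB mC : Equiv.Perm (Fin ℓ)}

theorem layerProA_comm (a b c : ℕ) : layerProA a c b = layerProA a b c := by
  simp only [layerProA, min_comm]

theorem promoteLayer_mem_Icc {L : V → ℕ} (hL : ∀ p, L p ∈ Set.Icc 1 q)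
    (hB : L V.A < L V.B) (hC : L V.A < L V.C) (p : V) : promoteLayer q L p ∈ Set.Icc 1 q := by
  have := hL V.A; have := hL V.B; have := hL V.C
  cases p <;> simp only [promoteLayer, layerProA, layerProLeaf, Set.mem_Icc] at * <;>
    split_ifs <;> omega

theorem Layer_mem_Icc (hf : IsVL ℓ q f) (i : Fin ℓ) (p : V) :
    Layer ℓ f mB mC i p ∈ Set.Icc 1 q := by
  cases p <;> exact hf.1 _ _

/-- `g` is the labeling reached after the toggles `τ_1, …, τ_j`: below level `j` its fibers
are counted like those of the promoted layers, above it like those of `f`. -/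
def IsProStage (q : ℕ) (f : V → Fin ℓ → ℕ) (mB mC : Equiv.Perm (Fin ℓ)) (j : ℕ)
    (g : V → Fin ℓ → ℕ) : Prop :=
  IsVL ℓ q g ∧
    (∀ p x, x ≤ j → countLE (g p) x = countLE (fun i => promoteLayer q (Layer ℓ f mB mC i) p) x) ∧
    ∀ p x, j < x → countLE (g p) x = countLE (f p) x

theorem isProStage_zero (hf : IsVL ℓ q f) (hmB : IsNCMatching ℓ f V.B mB)
    (hmC : IsNCMatching ℓ f V.C mC) : IsProStage q f mB mC 0 f := by
  refine ⟨hf, fun p x hx => ?_, fun _ _ _ => rfl⟩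
  obtain rfl : x = 0 := by omega
  rw [countLE_eq_zero fun i => (hf.1 p i).1, countLE_eq_zero fun i =>
    (promoteLayer_mem_Icc (Layer_mem_Icc hf i) (hmB.1 i) (hmC.1 i) p).1]

theorem IsProStage.BK (hf : IsVL ℓ q f) (hmB : IsNCMatching ℓ f V.B mB)
    (hmC : IsNCMatching ℓ f V.C mC) {j : ℕ} (hj : j + 1 < q) {g : V → Fin ℓ → ℕ}
    (hg : IsProStage q f mB mC j g) : IsProStage q f mB mC (j + 1) (BK ℓ q (j + 1) g) := by
  obtain ⟨hg, hlow, hhigh⟩ := hg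
  refine ⟨isVL_BK hg hj, fun p x hx => ?_, fun p x hx => ?_⟩
  · rcases hx.lt_or_eq with hx | rfl
    · rw [countLE_BK_of_ne hx.ne, hlow p x (by omega)]
    have ha := hf.2.2 V.A
    have ha1 : ∀ i, 1 ≤ f V.A i := fun i => (hf.1 V.A i).1
    have hb := fun x => countLE_comp_perm (f V.B) mB x
    have hc := fun x => countLE_comp_perm (f V.C) mC x
    cases p
    · rw [countLE_BK_A hg, hlow V.A j le_rfl, hhigh V.A _ (by omega), hhigh V.A _ (by omega),
        hhigh V.B _ (by omega), hhigh V.C _ (by omega), ← hb, ← hc]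
      exact (countLE_layerProA_succ hmB hmC ha ha1 j).symm
    · rw [countLE_BK_of_ne_A hg (by decide) hj, hlow V.A j le_rfl, hlow V.B j le_rfl,
        hhigh V.B _ (by omega), hhigh V.B _ (by omega), ← hb, ← hb]
      exact (countLE_layerProLeaf_succ hmB hmC ha ha1 hj).symm
    · rw [countLE_BK_of_ne_A hg (by decide) hj, hlow V.A j le_rfl, hlow V.C j le_rfl,
        hhigh V.C _ (by omega), hhigh V.C _ (by omega), ← hc, ← hc]
      have := countLE_layerProLeaf_succ hmC hmB ha ha1 hj
      simp only [layerProA_comm] at this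
      exact this.symm
  · rw [countLE_BK_of_ne (by omega), hhigh p x (by omega)]

theorem isProStage_Pro (hf : IsVL ℓ q f) (hmB : IsNCMatching ℓ f V.B mB)
    (hmC : IsNCMatching ℓ f V.C mC) : IsProStage q f mB mC (q - 1) (Pro ℓ q f) := by
  suffices ∀ j, j ≤ q - 1 →
      IsProStage q f mB mC j ((List.range j).foldl (fun g k => BK ℓ q (k + 1) g) f) from
    this (q - 1) le_rfl
  intro j hj
  induction j with
  | zero => exact isProStage_zero hf hmB hmC
  | succ j ih =>
    rw [List.range_succ, List.foldl_append]
    exact (ih (by omega)).BK hf hmB hmC (by omega)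

theorem map_Pro_eq_map_promoteLayer (hf : IsVL ℓ q f) (hmB : IsNCMatching ℓ f V.B mB)
    (hmC : IsNCMatching ℓ f V.C mC) (p : V) :
    univ.val.map (Pro ℓ q f p) =
      univ.val.map fun i => promoteLayer q (Layer ℓ f mB mC i) p := by
  obtain ⟨hPro, hlow, -⟩ := isProStage_Pro hf hmB hmC
  refine map_univ_eq_of_countLE_eq fun x => ?_
  rcases lt_or_ge x q with hx | hx
  · exact hlow p x (by omega)
  · rw [countLE_eq_of_le fun i => (hPro.1 p i).2.trans hx, countLE_eq_of_le fun i =>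
      (promoteLayer_mem_Icc (Layer_mem_Icc hf i) (hmB.1 i) (hmC.1 i) p).2.trans hx]

end Promotion

theorem Pro1_eq_promoteLayer {q : ℕ} {L : V → ℕ} (hL : ∀ p, L p ∈ Set.Icc 1 q)
    (hB : L V.A < L V.B) (hC : L V.A < L V.C) : Pro1 q L = promoteLayer q L := by
  have hf : IsVL 1 q fun p _ => L p := ⟨fun p _ => hL p, fun _ => ⟨hB, hC⟩, fun _ _ _ _ => le_rfl⟩
  have hm : ∀ p, L V.A < L p → IsNCMatching 1 (fun p _ => L p) p 1 := fun p hp =>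
    ⟨fun _ => hp, fun s s' hss' => absurd hss' (Subsingleton.elim s s').not_lt⟩
  funext p
  have := map_Pro_eq_map_promoteLayer hf (hm V.B hB) (hm V.C hC) p
  simp only [univ_unique, Fin.default_eq_zero, singleton_val, Multiset.map_singleton,
    Multiset.singleton_inj] at this
  cases p <;> exact this

theorem stmt3_general (ℓ q : ℕ)
    (f : V → Fin ℓ → ℕ) (hf : IsVL ℓ q f)
    (mB mC : Equiv.Perm (Fin ℓ))
    (hmB : IsNCMatching ℓ f V.B mB) (hmC : IsNCMatching ℓ f V.C mC) :
    (∀ p, Monotone (Pro ℓ q f p)) ∧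
      ∀ p, (Finset.univ.val.map fun j : Fin ℓ => Pro ℓ q f p j) =
        (Finset.univ.val.map fun i : Fin ℓ => Pro1 q (Layer ℓ f mB mC i) p) := by
  refine ⟨(isProStage_Pro hf hmB hmC).1.2.2, fun p => ?_⟩
  simp only [fun i => Pro1_eq_promoteLayer (Layer_mem_Icc hf i) (hmB.1 i) (hmC.1 i)]
  exact map_Pro_eq_map_promoteLayer hf hmB hmC p

/-- `Pro(f)` is obtained from the noncrossing layer decomposition `{L'_i}` of `f` by
applying single-layer promotion to each `L'_i` and then sorting the labels within each
fiber weakly increasingly; equivalently, the fibers of `Pro(f)` are weakly increasing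
and, for each `p ∈ {A,B,C}`, the multiset of labels of `Pro(f)` on the fiber of `p`
equals the multiset `{Pro(L'_i)(p) : 1 ≤ i ≤ ℓ}`. -/
theorem stmt3 (ℓ q : ℕ) (hℓ : 1 ≤ ℓ) (hq : 3 ≤ q)
    (f : V → Fin ℓ → ℕ) (hf : IsVL ℓ q f)
    (mB mC : Equiv.Perm (Fin ℓ))
    (hmB : IsNCMatching ℓ f V.B mB) (hmC : IsNCMatching ℓ f V.C mC) :
    (∀ p, Monotone (Pro ℓ q f p)) ∧
      ∀ p, (Finset.univ.val.map fun j : Fin ℓ => Pro ℓ q f p j) =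
        (Finset.univ.val.map fun i : Fin ℓ => Pro1 q (Layer ℓ f mB mC i) p) :=
  stmt3_general ℓ q f hf mB mC hmB hmC
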